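/- arXiv:1805.02136 — 2 statements merged into one kernel-verified Lean document; each statement's English description precedes it below -/
import Mathlib

section
/- Let ε > 0 with 2ε < 1/2. Then ⌈log(1/ε)⌉ ≤ N*(ε, 1/2, 2) ≤ ⌈log(1/ε)⌉ + 4. -/
open Set

/-- A learner strategy of length `N` with seed space `Fin Y` (representing `{1,…,𝒴}`):
query functions mapping previous responses and the seed to a query in `[0,1)`,
and an estimation function mapping all responses and the seed to an estimate in `[0,1)`. -/
structure Strategy (N Y : ℕ) where
  query : (k : Fin N) → (Fin (k : ℕ) → Bool) → Fin Y → ℝ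
  estimate : (Fin N → Bool) → Fin Y → ℝ
  query_mem : ∀ k h y, query k h y ∈ Set.Ico (0 : ℝ) 1
  estimate_mem : ∀ r y, estimate r y ∈ Set.Ico (0 : ℝ) 1

namespace Strategy

variable {N Y : ℕ}

/-- The first `k` responses when the true value is `x` and the seed is `y`:
`r_k = 1` iff `x ≥ q_k`. -/
noncomputable def resps (φ : Strategy N Y) (x : ℝ) (y : Fin Y) : (k : ℕ) → Fin k → Bool
  | 0 => Fin.elim0
  | k + 1 => fun i =>
      if h : (i : ℕ) < k then resps φ x y k ⟨i, h⟩
      else if hk : k < N then decide (φ.query ⟨k, hk⟩ (resps φ x y k) y ≤ x)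
      else false

/-- The query sequence `q̄(x,y)`. -/
noncomputable def queries (φ : Strategy N Y) (x : ℝ) (y : Fin Y) : Fin N → ℝ :=
  fun k => φ.query k (resps φ x y (k : ℕ)) y

/-- The learner's estimate `x̂(x,y)`. -/
noncomputable def estim (φ : Strategy N Y) (x : ℝ) (y : Fin Y) : ℝ :=
  φ.estimate (resps φ x y N) y

/-- `Q(x)`: the set of query sequences that can arise when the true value is `x`. -/
def Q (φ : Strategy N Y) (x : ℝ) : Set (Fin N → ℝ) :=
  {q | ∃ y : Fin Y, φ.queries x y = q}

/-- The information set `I(q̄)` of the adversary. -/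
def infoSet (φ : Strategy N Y) (q : Fin N → ℝ) : Set ℝ :=
  {x | x ∈ Set.Ico (0 : ℝ) 1 ∧ q ∈ φ.Q x}

/-- The accuracy constraint with parameter `ε`. -/
def Accurate (ε : ℝ) (φ : Strategy N Y) : Prop :=
  ∀ x ∈ Set.Ico (0 : ℝ) 1, ∀ y : Fin Y, |φ.estim x y - x| ≤ ε / 2

end Strategy

/-- `E` is `(δ,L)`-coverable: `E` is contained in the union of `L` closed intervals
of length at most `δ` each. -/
def Coverable (δ : ℝ) (L : ℕ) (E : Set ℝ) : Prop :=
  ∃ a b : Fin L → ℝ, (∀ j, b j - a j ≤ δ) ∧ E ⊆ ⋃ j, Set.Icc (a j) (b j)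

/-- The `δ`-cover number `C_δ(E)`: the least positive `L` such that `E` is `(δ,L)`-coverable. -/
noncomputable def coverNumber (δ : ℝ) (E : Set ℝ) : ℕ :=
  sInf {L : ℕ | 0 < L ∧ Coverable δ L E}

/-- An `(ε,δ,L)`-private learner strategy. -/
def IsPrivate (ε δ : ℝ) (L : ℕ) {N Y : ℕ} (φ : Strategy N Y) : Prop :=
  φ.Accurate ε ∧ ∀ x ∈ Set.Ico (0 : ℝ) 1, ∀ q ∈ φ.Q x, L ≤ coverNumber δ (φ.infoSet q)

/-- `N*(ε,δ,L)`: the least length for which an `(ε,δ,L)`-private strategy exists. -/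
noncomputable def Nstar (ε δ : ℝ) (L : ℕ) : ℕ :=
  sInf {N : ℕ | ∃ Y : ℕ, 0 < Y ∧ ∃ φ : Strategy N Y, IsPrivate ε δ L φ}

/-!
With the seed fixed, the estimate depends only on the `N` response bits, so `[0,1)` splits into
at most `2 ^ N` pieces on each of which the estimate is constant; accuracy makes each piece of
diameter at most `ε`, hence of length at most `ε`, and `2 ^ N * ε ≥ 1`.

Conversely, a learner may first ask `ε` and `1 - ε`: a value in one of the edge intervals
`[0, ε)`, `[1 - ε, 1)` is then known to accuracy `ε`, and a value in `[ε, 1 - ε)` is located by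
bisection. At the edges the learner keeps asking the queries of a bisection, but driven by the
bits of the seed, which ranges over all response vectors. Hence every query sequence is also
produced by the two edge points `0` and `1 - ε / 2`, which lie more than `1/2` apart, and the
information set cannot be covered by a single interval of length `1/2`.
-/

open MeasureTheory

noncomputable def mid (p : ℝ × ℝ) : ℝ := (p.1 + p.2) / 2

noncomputable def halve (p : ℝ × ℝ) (upper : Bool) : ℝ × ℝ :=
  if upper then (mid p, p.2) else (p.1, mid p)

noncomputable def bisect (p : ℝ × ℝ) (b : ℕ → Bool) : ℕ → ℝ × ℝ
  | 0 => p
  | n + 1 => halve (bisect p b n) (b n)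

section Bisection

variable (p : ℝ × ℝ) (b : ℕ → Bool)

lemma bisect_congr {b b' : ℕ → Bool} {n : ℕ} (h : ∀ j < n, b j = b' j) :
    bisect p b n = bisect p b' n := by
  induction n with
  | zero => rfl
  | succ n ih => simp only [bisect, ih fun j hj => h j (by omega), h n (by omega)]

lemma bisect_width (n : ℕ) : (bisect p b n).2 - (bisect p b n).1 = (p.2 - p.1) / 2 ^ n := by
  induction n with
  | zero => simp [bisect]
  | succ n ih =>
    rw [pow_succ, ← div_div, ← ih, bisect]
    unfold halve mid
    split <;> ring

lemma bisect_bounds (hp : p.1 ≤ p.2) (n : ℕ) :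
    p.1 ≤ (bisect p b n).1 ∧ (bisect p b n).2 ≤ p.2 := by
  induction n with
  | zero => simp [bisect]
  | succ n ih =>
    have hw := bisect_width p b n
    have : 0 ≤ (p.2 - p.1) / 2 ^ n := by have := sub_nonneg.2 hp; positivity
    rw [bisect]
    unfold halve mid
    split <;> constructor <;> linarith [ih.1, ih.2]

lemma mid_bisect_mem (hp : p.1 ≤ p.2) (n : ℕ) : mid (bisect p b n) ∈ Icc p.1 p.2 := by
  have := bisect_bounds p b hp n
  have := bisect_width p b n
  have : 0 ≤ (p.2 - p.1) / 2 ^ n := by have := sub_nonneg.2 hp; positivity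
  constructor <;> unfold mid <;> linarith

lemma mem_bisect {x : ℝ} {n : ℕ} (hx : x ∈ Ico p.1 p.2)
    (hb : ∀ j < n, b j = decide (mid (bisect p b j) ≤ x)) :
    x ∈ Ico (bisect p b n).1 (bisect p b n).2 := by
  induction n with
  | zero => exact hx
  | succ n ih =>
    obtain ⟨hlo, hhi⟩ := ih fun j hj => hb j (by omega)
    rw [bisect, hb n (by omega), halve]
    by_cases hm : mid (bisect p b n) ≤ x
    · simpa [hm] using And.intro hm hhi
    · simpa [hm] using And.intro hlo (not_le.1 hm)

lemma abs_mid_bisect_sub_le {x : ℝ} {n : ℕ} (hx : x ∈ Ico p.1 p.2)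
    (hb : ∀ j < n, b j = decide (mid (bisect p b j) ≤ x)) :
    |mid (bisect p b n) - x| ≤ (p.2 - p.1) / 2 ^ (n + 1) := by
  obtain ⟨hlo, hhi⟩ := mem_bisect p b hx hb
  have hw := bisect_width p b n
  rw [pow_succ, ← div_div, abs_le]
  constructor <;> unfold mid <;> linarith

end Bisection

def boolStream {k : ℕ} (h : Fin k → Bool) (i : ℕ) : Bool :=
  if hi : i < k then h ⟨i, hi⟩ else false

namespace Strategy

variable {N Y : ℕ} (φ : Strategy N Y) (x : ℝ) (y : Fin Y)

lemma resps_of_lt {j k : ℕ} (hjk : j < k) (hjN : j < N) :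
    φ.resps x y k ⟨j, hjk⟩ = decide (φ.queries x y ⟨j, hjN⟩ ≤ x) := by
  induction k with
  | zero => omega
  | succ k ih =>
    simp only [resps]
    by_cases hj : j < k
    · rw [dif_pos hj, ih hj]
    · obtain rfl : j = k := by omega
      rw [dif_neg (lt_irrefl j), dif_pos hjN]
      rfl

lemma boolStream_resps {j k : ℕ} (hjk : j < k) (hjN : j < N) :
    boolStream (φ.resps x y k) j = decide (φ.queries x y ⟨j, hjN⟩ ≤ x) := by
  rw [boolStream, dif_pos hjk, resps_of_lt]

noncomputable def respStream : ℕ → Bool := boolStream (φ.resps x y N)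

lemma respStream_of_lt {j : ℕ} (hj : j < N) :
    φ.respStream x y j = decide (φ.queries x y ⟨j, hj⟩ ≤ x) :=
  φ.boolStream_resps x y hj hj

lemma boolStream_resps_eq_respStream {j k : ℕ} (hjk : j < k) (hkN : k ≤ N) :
    boolStream (φ.resps x y k) j = φ.respStream x y j := by
  rw [boolStream_resps _ _ _ hjk (by omega), respStream_of_lt]

end Strategy

lemma one_le_card_mul_of_fiber_diam_le {α : Type*} [Fintype α] (f : ℝ → α) {ε : ℝ}
    (hf : ∀ x ∈ Ico (0 : ℝ) 1, ∀ x' ∈ Ico (0 : ℝ) 1, f x = f x' → |x - x'| ≤ ε) :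
    1 ≤ Fintype.card α * ε := by
  have hε : 0 ≤ ε := by simpa using hf 0 ⟨le_rfl, one_pos⟩ 0 ⟨le_rfl, one_pos⟩ rfl
  have hfiber (a : α) : volume (Ico (0 : ℝ) 1 ∩ f ⁻¹' {a}) ≤ ENNReal.ofReal ε := by
    refine (Real.volume_le_diam _).trans (Metric.ediam_le fun x hx x' hx' => ?_)
    rw [edist_dist, Real.dist_eq]
    exact ENNReal.ofReal_le_ofReal (hf x hx.1 x' hx'.1 (hx.2.trans hx'.2.symm))
  have hcover : Ico (0 : ℝ) 1 = ⋃ a, Ico (0 : ℝ) 1 ∩ f ⁻¹' {a} := by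
    ext x; simp
  rw [← ENNReal.ofReal_le_ofReal_iff (by positivity), ENNReal.ofReal_mul (by positivity),
    ENNReal.ofReal_natCast, ← sub_zero (1 : ℝ), ← Real.volume_Ico, hcover]
  calc volume (⋃ a, Ico (0 : ℝ) 1 ∩ f ⁻¹' {a})
      ≤ ∑ a, volume (Ico (0 : ℝ) 1 ∩ f ⁻¹' {a}) := measure_iUnion_fintype_le _ _
    _ ≤ ∑ _a : α, ENNReal.ofReal ε := Finset.sum_le_sum fun a _ => hfiber a
    _ = Fintype.card α * ENNReal.ofReal ε := by simp

lemma Strategy.Accurate.one_le_two_pow_mul {N Y : ℕ} {φ : Strategy N Y} {ε : ℝ}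
    (hφ : φ.Accurate ε) (hY : 0 < Y) : 1 ≤ 2 ^ N * ε := by
  have y : Fin Y := ⟨0, hY⟩
  have key := one_le_card_mul_of_fiber_diam_le (fun x => φ.resps x y N) (ε := ε)
    fun x hx x' hx' h => by
      have hest : φ.estim x y = φ.estim x' y := congrArg (φ.estimate · y) h
      have := hφ x hx y
      have := hφ x' hx' y
      rw [abs_le] at *
      constructor <;> linarith
  simpa using key

lemma one_le_two_pow_mul_iff {ε : ℝ} (hε : 0 < ε) (n : ℕ) :
    1 ≤ 2 ^ n * ε ↔ ⌈Real.logb 2 (1 / ε)⌉ ≤ n := by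
  rw [Int.ceil_le, Real.logb_le_iff_le_rpow one_lt_two (by positivity), Int.cast_natCast,
    Real.rpow_natCast, div_le_iff₀ hε]

lemma Coverable.mono {δ : ℝ} {L : ℕ} {E F : Set ℝ} (hEF : E ⊆ F) (hF : Coverable δ L F) :
    Coverable δ L E := by
  obtain ⟨a, b, hab, hcov⟩ := hF
  exact ⟨a, b, hab, hEF.trans hcov⟩

lemma coverable_two_Ico : Coverable (1 / 2) 2 (Ico (0 : ℝ) 1) := by
  refine ⟨![0, 1 / 2], ![1 / 2, 1], fun j => by fin_cases j <;> norm_num, fun x hx => ?_⟩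
  rcases lt_or_ge x (1 / 2) with h | h
  · exact mem_iUnion.2 ⟨0, hx.1, h.le⟩
  · exact mem_iUnion.2 ⟨1, h, hx.2.le⟩

lemma two_le_coverNumber {δ : ℝ} {E : Set ℝ} (hE : Coverable δ 2 E) {x x' : ℝ} (hx : x ∈ E)
    (hx' : x' ∈ E) (hxx' : δ < |x - x'|) : 2 ≤ coverNumber δ E := by
  refine le_csInf ⟨2, two_pos, hE⟩ fun L ⟨hL, a, b, hab, hcov⟩ => ?_
  by_contra! hL1
  obtain rfl : L = 1 := by omega
  obtain ⟨i, hi⟩ := mem_iUnion.1 (hcov hx)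
  obtain ⟨i', hi'⟩ := mem_iUnion.1 (hcov hx')
  obtain rfl := Subsingleton.elim i i'
  have := Real.dist_le_of_mem_Icc hi hi'
  rw [Real.dist_eq] at this
  linarith [hab i]

section EdgeQueries

variable (ε : ℝ)

def atEdge (g : ℕ → Bool) : Bool := !g 0 || g 1

def edgeSource (g s : ℕ → Bool) : ℕ → Bool := if atEdge g then s else g

noncomputable def edgeQuery : ℕ → (ℕ → Bool) → ℝ
  | 0, _ => ε
  | 1, _ => 1 - ε
  | k + 2, g => mid (bisect (ε, 1 - ε) (fun j => g (j + 2)) k)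

noncomputable def edgeEstimate (n : ℕ) (g : ℕ → Bool) : ℝ :=
  if g 0 then (if g 1 then 1 - ε / 2 else mid (bisect (ε, 1 - ε) (fun j => g (j + 2)) n))
  else ε / 2

lemma edgeQuery_congr {k : ℕ} {g g' : ℕ → Bool} (h : ∀ j < k, g j = g' j) :
    edgeQuery ε k g = edgeQuery ε k g' := by
  match k with
  | 0 | 1 => rfl
  | k + 2 => exact congrArg mid (bisect_congr _ fun j hj => h (j + 2) (by omega))

lemma edgeQuery_edgeSource_congr {k : ℕ} {g g' : ℕ → Bool} (s : ℕ → Bool)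
    (h : ∀ j < k, g j = g' j) :
    edgeQuery ε k (edgeSource g s) = edgeQuery ε k (edgeSource g' s) := by
  match k with
  | 0 | 1 => rfl
  | k + 2 =>
    have hedge : atEdge g = atEdge g' := by rw [atEdge, atEdge, h 0 (by omega), h 1 (by omega)]
    unfold edgeSource
    rw [hedge]
    split
    · rfl
    · exact edgeQuery_congr ε h

end EdgeQueries

lemma edgeQuery_mem {ε : ℝ} (hε : 0 < ε) (hε' : ε ≤ 1 / 2) (k : ℕ) (g : ℕ → Bool) :
    edgeQuery ε k g ∈ Ico (0 : ℝ) 1 := by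
  match k with
  | 0 => rw [edgeQuery]; exact ⟨hε.le, by linarith⟩
  | 1 => rw [edgeQuery]; exact ⟨by linarith, by linarith⟩
  | k + 2 =>
    obtain ⟨h1, h2⟩ := mid_bisect_mem (ε, 1 - ε) (fun j => g (j + 2)) (by dsimp; linarith) k
    rw [edgeQuery]
    exact ⟨by dsimp at h1; linarith, by dsimp at h2; linarith⟩

lemma edgeEstimate_mem {ε : ℝ} (hε : 0 < ε) (hε' : ε ≤ 1 / 2) (n : ℕ) (g : ℕ → Bool) :
    edgeEstimate ε n g ∈ Ico (0 : ℝ) 1 := by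
  unfold edgeEstimate
  split_ifs
  · exact ⟨by linarith, by linarith⟩
  · exact edgeQuery_mem hε hε' (n + 2) g
  · exact ⟨by linarith, by linarith⟩

noncomputable def seedBits {N : ℕ} (y : Fin (Fintype.card (Fin N → Bool))) : ℕ → Bool :=
  boolStream ((Fintype.equivFin _).symm y)

noncomputable def edgeStrategy {ε : ℝ} (hε : 0 < ε) (hε' : ε ≤ 1 / 2) (n : ℕ) :
    Strategy (n + 2) (Fintype.card (Fin (n + 2) → Bool)) where
  query k h y := edgeQuery ε k (edgeSource (boolStream h) (seedBits y))
  estimate r _ := edgeEstimate ε n (boolStream r)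
  query_mem _ _ _ := edgeQuery_mem hε hε' _ _
  estimate_mem _ _ := edgeEstimate_mem hε hε' _ _

namespace edgeStrategy

variable {ε : ℝ} (hε : 0 < ε) (hε' : ε ≤ 1 / 2) (n : ℕ) (x : ℝ)
  (y : Fin (Fintype.card (Fin (n + 2) → Bool)))

local notation "φ" => edgeStrategy hε hε' n

lemma queries_eq (k : Fin (n + 2)) :
    (φ).queries x y k = edgeQuery ε k (edgeSource ((φ).respStream x y) (seedBits y)) :=
  edgeQuery_edgeSource_congr ε _ fun _ hj => (φ).boolStream_resps_eq_respStream x y hj k.2.le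

lemma respStream_zero : (φ).respStream x y 0 = decide (ε ≤ x) := by
  rw [(φ).respStream_of_lt x y (by omega), queries_eq]
  rfl

lemma respStream_one : (φ).respStream x y 1 = decide (1 - ε ≤ x) := by
  rw [(φ).respStream_of_lt x y (by omega), queries_eq]
  rfl

lemma atEdge_respStream : atEdge ((φ).respStream x y) = true ↔ x ∉ Ico ε (1 - ε) := by
  rw [atEdge, respStream_zero, respStream_one]
  by_cases h : ε ≤ x <;> simp [h]

lemma exists_queries_eq {x' : ℝ} (hx' : x' ∉ Ico ε (1 - ε)) :
    ∃ y', (φ).queries x' y' = (φ).queries x y := by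
  refine ⟨Fintype.equivFin _ fun i => edgeSource ((φ).respStream x y) (seedBits y) i, ?_⟩
  funext k
  rw [queries_eq, queries_eq, edgeSource, if_pos ((atEdge_respStream hε hε' n x' _).2 hx')]
  refine edgeQuery_congr ε fun j hj => ?_
  simp [seedBits, boolStream, show j < n + 2 by omega]

theorem accurate (hn : 1 ≤ 2 ^ n * ε) : (φ).Accurate ε := by
  intro x hx y
  change |edgeEstimate ε n ((φ).respStream x y) - x| ≤ ε / 2
  rw [edgeEstimate, respStream_zero, respStream_one, abs_le]
  by_cases h0 : ε ≤ x
  · by_cases h1 : 1 - ε ≤ x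
    · simp only [h0, h1, decide_true, if_true]
      constructor <;> linarith [hx.2]
    simp only [h0, h1, decide_true, decide_false, if_true, Bool.false_eq_true, if_false]
    have hsrc : edgeSource ((φ).respStream x y) (seedBits y) = (φ).respStream x y := by
      rw [edgeSource, if_neg]
      rw [atEdge_respStream, not_not]
      exact ⟨h0, lt_of_not_ge h1⟩
    have hb (j : ℕ) (hj : j < n) : (φ).respStream x y (j + 2) =
        decide (mid (bisect (ε, 1 - ε) (fun i => (φ).respStream x y (i + 2)) j) ≤ x) := by
      rw [(φ).respStream_of_lt x y (by omega : j + 2 < n + 2), queries_eq, hsrc]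
      rfl
    have hmid := abs_mid_bisect_sub_le (ε, 1 - ε) _ ⟨h0, lt_of_not_ge h1⟩ hb
    have hwidth : (1 - ε - ε) / 2 ^ (n + 1) ≤ ε / 2 := by
      rw [div_le_iff₀ (by positivity), pow_succ]
      nlinarith
    rw [← abs_le]
    exact hmid.trans hwidth
  · simp only [h0, decide_false, Bool.false_eq_true, if_false]
    constructor <;> linarith [hx.1]

theorem isPrivate (hn : 1 ≤ 2 ^ n * ε) : IsPrivate ε (1 / 2) 2 φ := by
  refine ⟨accurate hε hε' n hn, fun x _ q ⟨y, hq⟩ => ?_⟩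
  have mem_infoSet {x'} (hx' : x' ∈ Ico (0 : ℝ) 1) (hedge : x' ∉ Ico ε (1 - ε)) :
      x' ∈ (φ).infoSet q := ⟨hx', hq ▸ exists_queries_eq hε hε' n x y hedge⟩
  refine two_le_coverNumber (coverable_two_Ico.mono fun _ h => h.1)
    (mem_infoSet (x' := 0) ⟨le_rfl, one_pos⟩ fun h => ?_)
    (mem_infoSet (x' := 1 - ε / 2) ⟨by linarith, by linarith⟩ fun h => ?_) ?_
  · linarith [h.1]
  · linarith [h.2]
  · rw [abs_sub_comm, abs_of_pos] <;> linarith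

end edgeStrategy

/-- for `L = 2` and `δ = 1/2`,
`⌈log₂(1/ε)⌉ ≤ N*(ε, 1/2, 2) ≤ ⌈log₂(1/ε)⌉ + 4`. -/
theorem query_complexity_L_two (ε : ℝ) (hε : 0 < ε) (h : 2 * ε < 1 / 2) :
    ⌈Real.logb 2 (1 / ε)⌉ ≤ (Nstar ε (1 / 2) 2 : ℤ) ∧
    (Nstar ε (1 / 2) 2 : ℤ) ≤ ⌈Real.logb 2 (1 / ε)⌉ + 4 := by
  have hlog : 0 ≤ ⌈Real.logb 2 (1 / ε)⌉ :=
    Int.ceil_nonneg (Real.logb_nonneg one_lt_two (by rw [le_div_iff₀ hε]; linarith))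
  obtain ⟨n, hn⟩ := Int.eq_ofNat_of_zero_le hlog
  have hmem :
      n + 2 ∈ {N : ℕ | ∃ Y : ℕ, 0 < Y ∧ ∃ φ : Strategy N Y, IsPrivate ε (1 / 2) 2 φ} :=
    ⟨_, Fintype.card_pos, edgeStrategy hε (by linarith) n,
      edgeStrategy.isPrivate _ _ n ((one_le_two_pow_mul_iff hε n).2 hn.le)⟩
  constructor
  · obtain ⟨Y, hY, φ, hφ, -⟩ := Nat.sInf_mem ⟨_, hmem⟩
    exact (one_le_two_pow_mul_iff hε _).1 (hφ.one_le_two_pow_mul hY)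
  · have := Nat.sInf_le hmem
    unfold Nstar
    omega
end

section
/- Let 0 < ε < δ ≤ 1 and let φ be a learner strategy of length N satisfying the accuracy constraint with parameter ε. Then for every seed y ∈ {1,…,𝒴} there exists x ∈ (0,δ) such that at least ⌈log(δ/ε)⌉ of the queries q_1(x,y),…,q_N(x,y) belong to the interval (0,δ). -/
open Set

/-!
An adversary maintains an open interval of true values inside `(0, δ)` on which all responses
so far coincide. A query outside the interval changes nothing; a query inside it lies in
`(0, δ)`, and the adversary keeps the larger side, losing at most half the length. So after all
`N` queries the interval has length at least `δ / 2 ^ c`, where `c` counts the queries in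
`(0, δ)`. Its points share one estimate, so by accuracy they are within `ε` of each other, and
`δ / ε ≤ 2 ^ c`.
-/

lemma le_iff_le_of_notMem_Ioo {a b q x x' : ℝ} (hq : q ∉ Ioo a b)
    (hx : x ∈ Ioo a b) (hx' : x' ∈ Ioo a b) : q ≤ x ↔ q ≤ x' := by
  simp only [mem_Ioo, not_and_or, not_lt] at hq hx hx'
  constructor <;> intro <;> rcases hq with hq | hq <;> linarith

lemma exists_Ioo_half_subset_notMem {a b q : ℝ} (hq : q ∈ Ioo a b) :
    ∃ a' b', a' < b' ∧ Ioo a' b' ⊆ Ioo a b ∧ q ∉ Ioo a' b' ∧ b - a ≤ 2 * (b' - a') := by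
  rcases le_total q ((a + b) / 2) with hmid | hmid
  · exact ⟨q, b, hq.2, Ioo_subset_Ioo_left hq.1.le, fun h => h.1.false, by linarith⟩
  · exact ⟨a, q, hq.1, Ioo_subset_Ioo_right hq.2.le, fun h => h.2.false, by linarith⟩

namespace Strategy

variable {N Y : ℕ} (φ : Strategy N Y) (y : Fin Y)

lemma resps_succ (x : ℝ) {k : ℕ} (hk : k < N) :
    φ.resps x y (k + 1) = Fin.snoc (α := fun _ => Bool) (φ.resps x y k)
      (decide (φ.queries x y ⟨k, hk⟩ ≤ x)) := by
  funext i
  by_cases hi : (i : ℕ) < k <;> simp [resps, Fin.snoc, hi, hk, queries] <;> rfl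

lemma queries_eq_of_resps_eq {x x' : ℝ} {k : ℕ} (hk : k < N)
    (h : φ.resps x y k = φ.resps x' y k) : φ.queries x y ⟨k, hk⟩ = φ.queries x' y ⟨k, hk⟩ :=
  congrArg (φ.query ⟨k, hk⟩ · y) h

lemma resps_succ_eq_of_resps_eq {x x' : ℝ} {k : ℕ} (hk : k < N)
    (h : φ.resps x y k = φ.resps x' y k)
    (hside : φ.queries x y ⟨k, hk⟩ ≤ x ↔ φ.queries x y ⟨k, hk⟩ ≤ x') :
    φ.resps x y (k + 1) = φ.resps x' y (k + 1) := by
  rw [resps_succ φ y x hk, resps_succ φ y x' hk, h, ← queries_eq_of_resps_eq φ y hk h,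
    decide_eq_decide.2 hside]

noncomputable def queryCount (x : ℝ) (s : Set ℝ) [DecidablePred (· ∈ s)] (k : ℕ) : ℕ :=
  (Finset.univ.filter fun i : Fin N => (i : ℕ) < k ∧ φ.queries x y i ∈ s).card

variable (s : Set ℝ) [DecidablePred (· ∈ s)]

lemma queryCount_mono (x : ℝ) : Monotone (φ.queryCount y x s) :=
  fun _ _ hkl => Finset.card_le_card <| Finset.monotone_filter_right _
    fun _ _ h => ⟨h.1.trans_le hkl, h.2⟩

lemma queryCount_succ_of_mem {x : ℝ} {k : ℕ} (hk : k < N) (hq : φ.queries x y ⟨k, hk⟩ ∈ s) :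
    φ.queryCount y x s k + 1 ≤ φ.queryCount y x s (k + 1) := by
  have hnew : (⟨k, hk⟩ : Fin N) ∉
      Finset.univ.filter fun i : Fin N => (i : ℕ) < k ∧ φ.queries x y i ∈ s := by simp
  rw [queryCount, ← Finset.card_insert_of_notMem hnew]
  refine Finset.card_le_card fun i hi => ?_
  rcases Finset.mem_insert.1 hi with rfl | hi
  · simpa using hq
  · simp only [Finset.mem_filter, Finset.mem_univ, true_and] at hi ⊢
    exact ⟨Nat.lt_succ_of_lt hi.1, hi.2⟩

lemma exists_Ioo_resps_eq_succ {a₀ b₀ a b : ℝ} {k : ℕ} (hk : k < N) (hab : a < b)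
    (hsub : Ioo a b ⊆ Ioo a₀ b₀)
    (hresps : ∀ x ∈ Ioo a b, ∀ x' ∈ Ioo a b, φ.resps x y k = φ.resps x' y k)
    (hlen : ∀ x ∈ Ioo a b, b₀ - a₀ ≤ 2 ^ φ.queryCount y x (Ioo a₀ b₀) k * (b - a)) :
    ∃ a' b', a' < b' ∧ Ioo a' b' ⊆ Ioo a₀ b₀ ∧
      (∀ x ∈ Ioo a' b', ∀ x' ∈ Ioo a' b', φ.resps x y (k + 1) = φ.resps x' y (k + 1)) ∧
      ∀ x ∈ Ioo a' b', b₀ - a₀ ≤ 2 ^ φ.queryCount y x (Ioo a₀ b₀) (k + 1) * (b' - a') := by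
  have hmid : (a + b) / 2 ∈ Ioo a b := ⟨by linarith, by linarith⟩
  set q := φ.queries ((a + b) / 2) y ⟨k, hk⟩
  have hq : ∀ x ∈ Ioo a b, φ.queries x y ⟨k, hk⟩ = q :=
    fun x hx => queries_eq_of_resps_eq φ y hk (hresps x hx _ hmid)
  have hresps_succ : ∀ a' b', Ioo a' b' ⊆ Ioo a b → q ∉ Ioo a' b' →
      ∀ x ∈ Ioo a' b', ∀ x' ∈ Ioo a' b', φ.resps x y (k + 1) = φ.resps x' y (k + 1) :=
    fun a' b' hsub' hq' x hx x' hx' => resps_succ_eq_of_resps_eq φ y hk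
      (hresps x (hsub' hx) x' (hsub' hx'))
      (by rw [hq x (hsub' hx)]; exact le_iff_le_of_notMem_Ioo hq' hx hx')
  by_cases hqab : q ∈ Ioo a b
  · obtain ⟨a', b', hab', hsub', hq', hhalf⟩ := exists_Ioo_half_subset_notMem hqab
    refine ⟨a', b', hab', hsub'.trans hsub, hresps_succ a' b' hsub' hq', fun x hx => ?_⟩
    have hcount := φ.queryCount_succ_of_mem y (Ioo a₀ b₀) hk
      ((hq x (hsub' hx)).symm ▸ hsub hqab)
    calc b₀ - a₀ ≤ 2 ^ φ.queryCount y x (Ioo a₀ b₀) k * (b - a) := hlen x (hsub' hx)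
      _ ≤ 2 ^ φ.queryCount y x (Ioo a₀ b₀) k * (2 * (b' - a')) := by gcongr
      _ = 2 ^ (φ.queryCount y x (Ioo a₀ b₀) k + 1) * (b' - a') := by ring
      _ ≤ 2 ^ φ.queryCount y x (Ioo a₀ b₀) (k + 1) * (b' - a') := by
        gcongr
        norm_num
  · refine ⟨a, b, hab, hsub, hresps_succ a b subset_rfl hqab, fun x hx => ?_⟩
    calc b₀ - a₀ ≤ 2 ^ φ.queryCount y x (Ioo a₀ b₀) k * (b - a) := hlen x hx
      _ ≤ 2 ^ φ.queryCount y x (Ioo a₀ b₀) (k + 1) * (b - a) := by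
        gcongr
        · norm_num
        · exact φ.queryCount_mono y _ x k.le_succ

lemma exists_Ioo_resps_eq {a₀ b₀ : ℝ} (h : a₀ < b₀) {k : ℕ} (hk : k ≤ N) :
    ∃ a b, a < b ∧ Ioo a b ⊆ Ioo a₀ b₀ ∧
      (∀ x ∈ Ioo a b, ∀ x' ∈ Ioo a b, φ.resps x y k = φ.resps x' y k) ∧
      ∀ x ∈ Ioo a b, b₀ - a₀ ≤ 2 ^ φ.queryCount y x (Ioo a₀ b₀) k * (b - a) := by
  induction k with
  | zero => exact ⟨a₀, b₀, h, subset_rfl, fun _ _ _ _ => funext fun i => i.elim0,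
      fun _ _ => by simp [queryCount]⟩
  | succ k ih =>
    obtain ⟨a, b, hab, hsub, hresps, hlen⟩ := ih (Nat.le_of_succ_le hk)
    exact φ.exists_Ioo_resps_eq_succ y hk hab hsub hresps hlen

variable {φ}

lemma Accurate.nonneg {ε : ℝ} (hacc : φ.Accurate ε) (y : Fin Y) : 0 ≤ ε := by
  linarith [abs_nonneg (φ.estim 0 y - 0), hacc 0 ⟨le_rfl, one_pos⟩ y]

lemma Accurate.abs_sub_le_of_resps_eq {ε x x' : ℝ} (hacc : φ.Accurate ε)
    (hx : x ∈ Ico (0 : ℝ) 1) (hx' : x' ∈ Ico (0 : ℝ) 1) (h : φ.resps x y N = φ.resps x' y N) :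
    |x - x'| ≤ ε := by
  have hest : φ.estim x y = φ.estim x' y := congrArg (φ.estimate · y) h
  calc |x - x'| = |(φ.estim x' y - x') - (φ.estim x y - x)| := by rw [hest]; ring_nf
    _ ≤ |φ.estim x' y - x'| + |φ.estim x y - x| := abs_sub _ _
    _ ≤ ε / 2 + ε / 2 := add_le_add (hacc x' hx' y) (hacc x hx y)
    _ = ε := add_halves ε

lemma Accurate.sub_le_of_resps_eq {ε a b : ℝ} (hacc : φ.Accurate ε) (hab : a ≤ b)
    (hsub : Ioo a b ⊆ Ico (0 : ℝ) 1)
    (hresps : ∀ x ∈ Ioo a b, ∀ x' ∈ Ioo a b, φ.resps x y N = φ.resps x' y N) : b - a ≤ ε := by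
  rw [← Real.diam_Ioo hab]
  exact Metric.diam_le_of_forall_dist_le (hacc.nonneg y) fun x hx x' hx' =>
    hacc.abs_sub_le_of_resps_eq y (hsub hx) (hsub hx') (hresps x hx x' hx')

end Strategy

/-- for any accurate strategy and any seed `y`, there is a true value
`x ∈ (0,δ)` for which at least `⌈log₂(δ/ε)⌉` of the queries `q_1(x,y),…,q_N(x,y)`
lie in `(0,δ)`. -/
theorem many_queries_in_small_interval {N Y : ℕ} (ε δ : ℝ)
    (hε : 0 < ε) (h1 : ε < δ) (h2 : δ ≤ 1)
    (φ : Strategy N Y) (hacc : φ.Accurate ε) :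
    ∀ y : Fin Y, ∃ x ∈ Set.Ioo (0 : ℝ) δ,
      ⌈Real.logb 2 (δ / ε)⌉ ≤
        (((Finset.univ.filter fun k : Fin N => φ.queries x y k ∈ Set.Ioo (0 : ℝ) δ).card : ℤ)) := by
  intro y
  obtain ⟨a, b, hab, hsub, hresps, hlen⟩ := φ.exists_Ioo_resps_eq y (hε.trans h1) le_rfl
  obtain ⟨x, hx⟩ := nonempty_Ioo.2 hab
  refine ⟨x, hsub hx, ?_⟩
  set c := φ.queryCount y x (Ioo 0 δ) N
  have hc : c = (Finset.univ.filter fun k : Fin N => φ.queries x y k ∈ Ioo 0 δ).card := by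
    simp only [c, Strategy.queryCount, Fin.is_lt, true_and]
  have hba : b - a ≤ ε := hacc.sub_le_of_resps_eq y hab.le
    (hsub.trans fun x hx => ⟨hx.1.le, hx.2.trans_le h2⟩) hresps
  have hpow : δ / ε ≤ 2 ^ (c : ℝ) := by
    rw [div_le_iff₀ hε, Real.rpow_natCast]
    calc δ = δ - 0 := (sub_zero δ).symm
      _ ≤ 2 ^ c * (b - a) := hlen x hx
      _ ≤ 2 ^ c * ε := by gcongr
  rw [Int.ceil_le, ← hc, Int.cast_natCast,
    Real.logb_le_iff_le_rpow one_lt_two (div_pos (hε.trans h1) hε)]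
  exact hpow
end
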